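/- arXiv:1201.4686 — 5 statements merged into one kernel-verified Lean document; each statement's English description precedes it below -/
import Mathlib

section
/- Let ε > 0. There exists a constant C > 0, depending only on ε, with the following property. Let G be a finite group with |G| ≥ 4 such that every symmetric subset A of G containing the identity and generating G satisfies either A·A·A = G or |A·A·A| ≥ |A|^{1+ε}. Then for every symmetric generating set S of G containing the identity with |S| ≥ 2, there is an integer m ≤ C·(log |G|)^{(log 3)/(log(1+ε))} such that S^m = G. -/
open Pointwise
/-- Growth implies poly-logarithmic diameter: if every symmetric generating set `A` of a finite
group `G` (with `1 ∈ A`) satisfies `A·A·A = G` or `|A·A·A| ≥ |A|^{1+ε}`, then every symmetric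
generating set `S` with `1 ∈ S` and `|S| ≥ 2` satisfies `S^m = G` for some
`m ≤ C·(log |G|)^{log 3 / log(1+ε)}`. -/
theorem growth_implies_polylog_diameter (ε : ℝ) (hε : 0 < ε) :
    ∃ C : ℝ, 0 < C ∧
      ∀ (G : Type) [Group G] [Fintype G] [DecidableEq G],
        4 ≤ Fintype.card G →
        (∀ A : Finset G, A⁻¹ = A → (1 : G) ∈ A → Subgroup.closure (A : Set G) = ⊤ →
          (A * A * A = Finset.univ ∨ ((A * A * A).card : ℝ) ≥ (A.card : ℝ) ^ (1 + ε))) →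
        ∀ S : Finset G, S⁻¹ = S → (1 : G) ∈ S → Subgroup.closure (S : Set G) = ⊤ →
          2 ≤ S.card →
          ∃ m : ℕ, (m : ℝ) ≤ C * (Real.log (Fintype.card G)) ^ (Real.log 3 / Real.log (1 + ε)) ∧
            S ^ m = Finset.univ := by
  have hlog1ε : 0 < Real.log (1 + ε) := Real.log_pos (by linarith)
  set α : ℝ := Real.log 3 / Real.log (1 + ε) with hαdef
  have hαpos : 0 < α := div_pos (Real.log_pos (by norm_num)) hlog1ε
  have hlog2 : (0:ℝ) < Real.log 2 := Real.log_pos (by norm_num)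
  refine ⟨3 * ((Real.log 2)⁻¹) ^ α, by positivity, ?_⟩
  intro G _ _ _ hcard hgrowth S hSinv hS1 hSgen hS2
  set N : ℕ := Fintype.card G with hNdef
  have hN4 : (4:ℝ) ≤ (N:ℝ) := by exact_mod_cast hcard
  have hNpos : (0:ℝ) < (N:ℝ) := by linarith
  set L : ℝ := Real.logb 2 N with hLdef
  have hL2 : 2 ≤ L := by
    rw [hLdef, Real.logb, le_div_iff₀ hlog2]
    have h4 : Real.log 4 ≤ Real.log N := Real.log_le_log (by norm_num) hN4
    have : Real.log 4 = 2 * Real.log 2 := by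
      rw [show (4:ℝ) = 2 ^ (2:ℕ) by norm_num, Real.log_pow]; push_cast; ring
    linarith
  -- the iterated growth claim
  have key : ∀ k : ℕ, S ^ (3 ^ k) = Finset.univ ∨
      (2:ℝ) ^ ((1 + ε) ^ k) ≤ ((S ^ (3 ^ k)).card : ℝ) := by
    intro k
    induction k with
    | zero =>
      right
      simp only [pow_zero, pow_one, Real.rpow_one]
      exact_mod_cast hS2
    | succ k ih =>
      rcases ih with h | h
      · left
        have hsub : S ^ (3 ^ k) ⊆ S ^ (3 ^ (k + 1)) :=
          Finset.pow_subset_pow_right hS1 (Nat.pow_le_pow_right (by norm_num) (Nat.le_succ k))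
        exact Finset.univ_subset_iff.mp (h ▸ hsub)
      · set A : Finset G := S ^ (3 ^ k) with hAdef
        have hAinv : A⁻¹ = A := by rw [hAdef, ← inv_pow, hSinv]
        have hA1 : (1:G) ∈ A := Finset.one_mem_pow hS1
        have hSA : S ⊆ A := Finset.subset_pow hS1 (by positivity)
        have hAgen : Subgroup.closure (A : Set G) = ⊤ := by
          apply top_unique
          rw [← hSgen]
          exact Subgroup.closure_mono (by exact_mod_cast hSA)
        have h3 : A ^ 3 = A * A * A := by rw [pow_succ, pow_succ, pow_one]
        have hpow : S ^ (3 ^ (k + 1)) = A ^ 3 := by rw [hAdef, ← pow_mul, ← pow_succ]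
        rcases hgrowth A hAinv hA1 hAgen with hcase | hcase
        · left; rw [hpow, h3, hcase]
        · right
          rw [hpow, h3]
          calc (2:ℝ) ^ ((1 + ε) ^ (k + 1))
              = ((2:ℝ) ^ ((1 + ε) ^ k)) ^ (1 + ε) := by
                rw [← Real.rpow_mul (by norm_num), ← pow_succ]
            _ ≤ ((A.card : ℝ)) ^ (1 + ε) :=
                Real.rpow_le_rpow (by positivity) h (by linarith)
            _ ≤ ((A * A * A).card : ℝ) := hcase
  -- choose the minimal k with L < (1+ε)^k
  have hex : ∃ n : ℕ, L < (1 + ε) ^ n := pow_unbounded_of_one_lt L (by linarith)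
  obtain ⟨k, hk, hkmin⟩ : ∃ k : ℕ, L < (1 + ε) ^ k ∧ ∀ j < k, ¬ L < (1 + ε) ^ j :=
    ⟨Nat.find hex, Nat.find_spec hex, fun j hj => Nat.find_min hex hj⟩
  have hkub : ((1 + ε) : ℝ) ^ k ≤ (1 + ε) * L := by
    rcases Nat.eq_zero_or_pos k with h0 | h0
    · rw [h0, pow_zero]
      nlinarith
    · obtain ⟨j, rfl⟩ := Nat.exists_eq_succ_of_ne_zero h0.ne'
      have hj : (1 + ε) ^ j ≤ L := not_lt.mp (hkmin j (Nat.lt_succ_self j))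
      rw [pow_succ]
      nlinarith
  -- S^(3^k) = univ
  have hfinal : S ^ (3 ^ k) = Finset.univ := by
    rcases key k with h | h
    · exact h
    · exfalso
      have h1 : ((S ^ (3 ^ k)).card : ℝ) ≤ (N:ℝ) := by
        exact_mod_cast Finset.card_le_univ _
      have h2 : (N:ℝ) < (2:ℝ) ^ ((1 + ε) ^ k) := by
        have : (2:ℝ) ^ L < (2:ℝ) ^ ((1 + ε) ^ k) :=
          (Real.rpow_lt_rpow_left_iff (by norm_num)).mpr hk
        rwa [hLdef, Real.rpow_logb (by norm_num) (by norm_num) hNpos] at this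
      linarith
  refine ⟨3 ^ k, ?_, hfinal⟩
  -- the size bound
  have h31 : ((1 + ε) : ℝ) ^ (α : ℝ) = 3 := by
    rw [Real.rpow_def_of_pos (by linarith), hαdef,
      mul_div_cancel₀ _ hlog1ε.ne', Real.exp_log (by norm_num)]
  have hcalc : ((3:ℝ)) ^ k = (((1 + ε):ℝ) ^ k) ^ α := by
    rw [← Real.rpow_natCast ((1+ε)) k, ← Real.rpow_mul (by linarith), mul_comm,
      Real.rpow_mul (by linarith), h31, Real.rpow_natCast]
  have hLnonneg : (0:ℝ) ≤ L := by linarith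
  have hmain : ((3:ℝ)) ^ k ≤ 3 * L ^ α := by
    calc ((3:ℝ)) ^ k = (((1 + ε):ℝ) ^ k) ^ α := hcalc
      _ ≤ ((1 + ε) * L) ^ α :=
          Real.rpow_le_rpow (by positivity) hkub hαpos.le
      _ = ((1 + ε):ℝ) ^ α * L ^ α := Real.mul_rpow (by linarith) hLnonneg
      _ = 3 * L ^ α := by rw [h31]
  have hLsplit : L ^ α = (Real.log N) ^ α * ((Real.log 2)⁻¹) ^ α := by
    rw [hLdef, Real.logb, div_eq_mul_inv]
    exact Real.mul_rpow (Real.log_nonneg (by linarith)) (by positivity)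
  push_cast
  calc ((3:ℝ)) ^ k ≤ 3 * L ^ α := hmain
    _ = 3 * ((Real.log 2)⁻¹) ^ α * (Real.log N) ^ α := by rw [hLsplit]; ring
end

section
/- Let G be a finite group, N a normal subgroup of G, and S a symmetric generating set of G containing the identity. Let L be a positive integer such that every coset of N in G contains an element of S^L. Then N is generated by S^{2L+1} ∩ N. -/
open Pointwise

/-!
Schreier's argument with the transversal `T = S^L`: moving a generator `s` past a representative
`t ∈ T` gives `s * t = t' * (t'⁻¹ * s * t)`, where `t' ∈ T` represents the coset `s * t * N` and
the Schreier generator `t'⁻¹ * s * t` lies in `T⁻¹ * S * T ∩ N = S^(2L+1) ∩ N`. Hence every word in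
`S` lies in `T * H` with `H` the subgroup generated by these elements, and for `n = t * h ∈ N` the
representative `t` itself lies in `S^L ∩ N ⊆ H`.
-/

namespace Subgroup

variable {G : Type*} [Group G] {N : Subgroup G} {S T : Set G}

theorem mul_subset_mul_closure_inter
    (hT : ∀ g : G, ∃ t ∈ T, (QuotientGroup.mk t : G ⧸ N) = (QuotientGroup.mk g : G ⧸ N)) :
    S * T ⊆ T * closure (T⁻¹ * S * T ∩ N) := by
  rintro _ ⟨s, hs, t, ht, rfl⟩
  obtain ⟨t', ht', hcoset⟩ := hT (s * t)
  refine ⟨t', ht', t'⁻¹ * (s * t), subset_closure ⟨?_, QuotientGroup.eq.mp hcoset⟩,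
    mul_inv_cancel_left _ _⟩
  rw [← mul_assoc]
  exact Set.mul_mem_mul (Set.mul_mem_mul (Set.inv_mem_inv.mpr ht') hs) ht

theorem coe_closure_subset_mul_closure_inter
    (hT : ∀ g : G, ∃ t ∈ T, (QuotientGroup.mk t : G ⧸ N) = (QuotientGroup.mk g : G ⧸ N))
    (hS : S⁻¹ = S) (hT₁ : (1 : G) ∈ T) :
    (closure S : Set G) ⊆ T * closure (T⁻¹ * S * T ∩ N) := by
  set H := closure (T⁻¹ * S * T ∩ N)
  have hmul : ∀ s ∈ S, ∀ x ∈ T * (H : Set G), s * x ∈ T * (H : Set G) := by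
    rintro s hs _ ⟨t, ht, h, hh, rfl⟩
    rw [← mul_assoc, ← coe_mul_coe H, ← mul_assoc]
    exact Set.mul_mem_mul (mul_subset_mul_closure_inter hT (Set.mul_mem_mul hs ht)) hh
  intro g hg
  induction hg using closure_induction_left with
  | one => exact ⟨1, hT₁, 1, H.one_mem, one_mul 1⟩
  | mul_left s hs x _ ih => exact hmul s hs x ih
  | inv_mul_cancel s hs x _ ih => exact hmul s⁻¹ (hS ▸ Set.inv_mem_inv.mpr hs) x ih

end Subgroup

theorem schreier_generation_general (G : Type*) [Group G]
    (N : Subgroup G)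
    (S : Set G) (hSsymm : S⁻¹ = S) (hSone : (1 : G) ∈ S)
    (hSgen : Subgroup.closure S = ⊤)
    (L : ℕ)
    (hcoset : ∀ g : G, ∃ s ∈ S ^ L,
      (QuotientGroup.mk s : G ⧸ N) = (QuotientGroup.mk g : G ⧸ N)) :
    Subgroup.closure (S ^ (2 * L + 1) ∩ (N : Set G)) = N := by
  have hpow : (S ^ L)⁻¹ * S * S ^ L = S ^ (2 * L + 1) := by
    rw [← inv_pow, hSsymm, ← pow_succ, ← pow_add]
    ring_nf
  have hle : Subgroup.closure (S ^ (2 * L + 1) ∩ (N : Set G)) ≤ N :=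
    (Subgroup.closure_le _).mpr Set.inter_subset_right
  refine le_antisymm hle fun n hn ↦ ?_
  obtain ⟨t, ht, h, hh, rfl⟩ := Subgroup.coe_closure_subset_mul_closure_inter hcoset hSsymm
    (Set.one_mem_pow hSone) (hSgen ▸ Subgroup.mem_top n)
  rw [hpow] at hh
  have htN : t ∈ N := (N.mul_mem_cancel_right (hle hh)).mp hn
  exact mul_mem (Subgroup.subset_closure ⟨Set.pow_subset_pow_right hSone (by omega) ht, htN⟩) hh

/-- Schreier-type generation lemma: if every coset of a normal subgroup `N` of the finite group
`G` meets `S^L`, then `N` is generated by `S^{2L+1} ∩ N`. -/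
theorem schreier_generation (G : Type*) [Group G] [Finite G]
    (N : Subgroup G) [N.Normal]
    (S : Set G) (hSsymm : S⁻¹ = S) (hSone : (1 : G) ∈ S)
    (hSgen : Subgroup.closure S = ⊤)
    (L : ℕ) (hL : 0 < L)
    (hcoset : ∀ g : G, ∃ s ∈ S ^ L,
      (QuotientGroup.mk s : G ⧸ N) = (QuotientGroup.mk g : G ⧸ N)) :
    Subgroup.closure (S ^ (2 * L + 1) ∩ (N : Set G)) = N :=
  schreier_generation_general G N S hSsymm hSone hSgen L hcoset
end

section
/- Let p be a prime, n ≥ 2, and k ≥ 1 integers. Then |SL_n(ℤ/p^kℤ)| = p^{(k-1)(n²-1)} · |SL_n(ℤ/pℤ)|. -/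
/-!
Reduction `ZMod (p ^ k) → ZMod p` is a surjective ring map with kernel `K` of order `p ^ (k - 1)`,
and it reflects units, since `x` is a unit modulo `p ^ k` as soon as it is prime to `p`. Hence
the invertible matrices over `ℤ/p^k` form the full preimage of those over `ℤ/p`, so
`|GL_n(ℤ/p^k)| = |K|^(n²) |GL_n(ℤ/p)|`, while `|(ℤ/p^k)ˣ| = |K| |(ℤ/p)ˣ|`. As
`det : GL_n(R) → Rˣ` is onto with kernel `SL_n(R)`, dividing the two counts leaves the factor
`|K|^(n² - 1)`.
-/

theorem AddMonoidHom.card_preimage_of_surjective {A B : Type*} [AddGroup A] [AddGroup B]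
    {f : A →+ B} (hf : Function.Surjective f) (s : Set B) :
    Nat.card (f ⁻¹' s) = Nat.card f.ker * Nat.card s := by
  let e := QuotientAddGroup.quotientKerEquivOfSurjective f hf
  have hpre : f ⁻¹' s = ((↑) : A → A ⧸ f.ker) ⁻¹' (e ⁻¹' s) := rfl
  rw [hpre, Nat.card_congr (QuotientAddGroup.preimageMkEquivAddSubgroupProdSet _ _), Nat.card_prod,
    Nat.card_preimage_of_injective e.injective (by simp [e.surjective.range_eq])]

theorem RingHom.card_preimage_of_surjective {R S : Type*} [Ring R] [Ring S] {f : R →+* S}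
    (hf : Function.Surjective f) (s : Set S) :
    Nat.card (f ⁻¹' s) = Nat.card (RingHom.ker f) * Nat.card s :=
  f.toAddMonoidHom.card_preimage_of_surjective hf s

theorem Nat.card_units_eq_card_setOf_isUnit (M : Type*) [Monoid M] :
    Nat.card Mˣ = Nat.card {x : M | IsUnit x} :=
  Nat.card_congr (Equiv.ofInjective _ Units.val_injective)

theorem RingHom.card_units_eq_card_ker_mul {R S : Type*} [Ring R] [Ring S] (f : R →+* S)
    [IsLocalHom f] (hf : Function.Surjective f) :
    Nat.card Rˣ = Nat.card (RingHom.ker f) * Nat.card Sˣ := by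
  have hunits : {x : R | IsUnit x} = f ⁻¹' {y | IsUnit y} :=
    Set.ext fun x => (isUnit_map_iff f x).symm
  rw [Nat.card_units_eq_card_setOf_isUnit, Nat.card_units_eq_card_setOf_isUnit, hunits,
    RingHom.card_preimage_of_surjective hf]

theorem ZMod.isLocalHom_castHom_pow {p k : ℕ} [NeZero p] (hk : k ≠ 0) :
    IsLocalHom (ZMod.castHom (dvd_pow_self p hk) (ZMod p)) := by
  refine ⟨fun x hx => ?_⟩
  rw [castHom_apply, cast_eq_val, isUnit_iff_coprime] at hx
  rw [← natCast_zmod_val x, isUnit_iff_coprime]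
  exact hx.pow_right k

theorem ZMod.card_ker_castHom_pow {p k : ℕ} [NeZero p] (hk : k ≠ 0) :
    Nat.card (RingHom.ker (ZMod.castHom (dvd_pow_self p hk) (ZMod p))) = p ^ (k - 1) := by
  have hcard := RingHom.card_preimage_of_surjective (castHom_surjective (dvd_pow_self p hk)) .univ
  rw [Set.preimage_univ, Nat.card_univ, Nat.card_univ, Nat.card_zmod, Nat.card_zmod] at hcard
  exact Nat.eq_of_mul_eq_mul_right (Nat.pos_of_neZero p) (by rw [← hcard, pow_sub_one_mul hk])

namespace Matrix

variable {n R S : Type*} [Fintype n] [DecidableEq n] [CommRing R] [CommRing S]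

def SpecialLinearGroup.equivKerDet :
    SpecialLinearGroup n R ≃ (GeneralLinearGroup.det : GL n R →* Rˣ).ker where
  toFun A := ⟨A.toGL, by ext; simp⟩
  invFun g := ⟨g.1, by simpa using congrArg Units.val g.2⟩
  left_inv _ := rfl
  right_inv _ := Subtype.ext (Units.ext rfl)

theorem card_GL_eq_card_SL_mul_card_units [Nonempty n] :
    Nat.card (GL n R) = Nat.card (SpecialLinearGroup n R) * Nat.card Rˣ := by
  rw [Subgroup.card_eq_card_quotient_mul_card_subgroup GeneralLinearGroup.det.ker,
    Nat.card_congr (QuotientGroup.quotientKerEquivOfSurjective _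
      GeneralLinearGroup.det_surjective).toEquiv,
    Nat.card_congr (SpecialLinearGroup.equivKerDet (n := n) (R := R)), mul_comm]

def kerMapMatrixEquiv (f : R →+* S) :
    RingHom.ker (f.mapMatrix : Matrix n n R →+* Matrix n n S) ≃ (n → n → RingHom.ker f) where
  toFun A i j := ⟨A.1 i j, by simpa using congrFun (congrFun A.2 i) j⟩
  invFun M := ⟨fun i j => M i j, by ext i j; exact (M i j).2⟩
  left_inv _ := rfl
  right_inv _ := rfl

theorem card_ker_mapMatrix (f : R →+* S) :
    Nat.card (RingHom.ker (f.mapMatrix : Matrix n n R →+* Matrix n n S)) =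
      Nat.card (RingHom.ker f) ^ Fintype.card n ^ 2 := by
  rw [Nat.card_congr (kerMapMatrixEquiv f), Nat.card_fun, Nat.card_fun, ← pow_mul, sq,
    Nat.card_eq_fintype_card (α := n)]

variable (f : R →+* S) [IsLocalHom f]

instance isLocalHom_mapMatrix : IsLocalHom (f.mapMatrix : Matrix n n R →+* Matrix n n S) :=
  ⟨fun A hA => by
    rw [isUnit_iff_isUnit_det, ← RingHom.map_det, isUnit_map_iff] at hA
    exact (isUnit_iff_isUnit_det A).mpr hA⟩

theorem card_GL_eq_card_ker_pow_mul (hf : Function.Surjective f) :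
    Nat.card (GL n R) = Nat.card (RingHom.ker f) ^ Fintype.card n ^ 2 * Nat.card (GL n S) := by
  have hF : Function.Surjective (f.mapMatrix : Matrix n n R →+* Matrix n n S) := fun B =>
    ⟨B.map (Function.surjInv hf), by ext; simp [Function.surjInv_eq hf]⟩
  rw [RingHom.card_units_eq_card_ker_mul _ hF, card_ker_mapMatrix]

theorem card_SL_eq_card_ker_pow_mul [Finite R] [Nonempty n] (hf : Function.Surjective f) :
    Nat.card (SpecialLinearGroup n R) =
      Nat.card (RingHom.ker f) ^ (Fintype.card n ^ 2 - 1) * Nat.card (SpecialLinearGroup n S) := by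
  have : Finite S := Finite.of_surjective f hf
  have hGL := card_GL_eq_card_ker_pow_mul (n := n) f hf
  rw [card_GL_eq_card_SL_mul_card_units, card_GL_eq_card_SL_mul_card_units,
    f.card_units_eq_card_ker_mul hf, ← Nat.sub_one_add_one (pow_ne_zero 2 Fintype.card_ne_zero),
    pow_succ] at hGL
  have hpos : 0 < Nat.card (RingHom.ker f) * Nat.card Sˣ := Nat.mul_pos Nat.card_pos Nat.card_pos
  refine Nat.eq_of_mul_eq_mul_right hpos ?_
  rw [hGL]
  ring

end Matrix

/-- `|SL_n(ℤ/p^kℤ)| = p^{(k-1)(n²-1)} · |SL_n(ℤ/pℤ)|`. -/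
theorem sl_n_zmod_pow_card (p : ℕ) (hp : p.Prime) (n : ℕ) (hn : 2 ≤ n)
    (k : ℕ) (hk : 1 ≤ k) :
    Nat.card (Matrix.SpecialLinearGroup (Fin n) (ZMod (p ^ k))) =
      p ^ ((k - 1) * (n ^ 2 - 1)) *
        Nat.card (Matrix.SpecialLinearGroup (Fin n) (ZMod p)) := by
  have : NeZero p := ⟨hp.ne_zero⟩
  have : Nonempty (Fin n) := ⟨⟨0, by omega⟩⟩
  have hk0 : k ≠ 0 := by omega
  have := ZMod.isLocalHom_castHom_pow (p := p) hk0
  rw [Matrix.card_SL_eq_card_ker_pow_mul _ (ZMod.castHom_surjective (dvd_pow_self p hk0)),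
    ZMod.card_ker_castHom_pow hk0, Fintype.card_fin, ← pow_mul]
end

section
/- Let p be an odd prime, n ≥ 2, and k ≥ 1, i ≥ 1 integers. Then for every y ∈ SL_n(ℤ/p^kℤ) such that every entry of y − 1 is divisible by p^{i+1}, there exist x, z ∈ SL_n(ℤ/p^kℤ) with y = x^p · z, such that every entry of x − 1 is divisible by p^i and every entry of z − 1 is divisible by p^{min(i+2, k)}. -/
/-!
Write `y = 1 + p^(i+1) A`. Expanding `det (1 + r A) = 1 + r tr A + O(r²)` at `r = p^(i+1)` and using
`det y = 1` gives `p ∣ tr A`, so `x₀ = 1 + p^i A` has determinant `≡ 1 mod p^(i+1)`. As `p` is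
nilpotent this determinant is a unit, and dividing one row of `x₀` by it yields `x ∈ SL_n` with
`x = 1 + p^i B`, `B ≡ A mod p`. By the binomial theorem `x^p ≡ 1 + p^(i+1) B ≡ y mod p^(i+2)`, and
`z = x^(-p) y` does the rest. The trace step needs `i + 2 ≤ k`; for smaller `k`, `x = 1` and
`z = y` already work.
-/

open Finset Matrix

theorem Nat.Prime.pow_add_two_dvd_choose_mul_pow {p i j : ℕ} (hp : p.Prime) (hp3 : 3 ≤ p)
    (hi : 1 ≤ i) (hj : 2 ≤ j) (hjp : j ≤ p) : p ^ (i + 2) ∣ p.choose j * p ^ (i * j) := by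
  rcases hjp.lt_or_eq with hjp | hjp
  · obtain ⟨c, hc⟩ := hp.dvd_choose_self (by omega) hjp
    rw [hc, pow_succ', mul_assoc]
    exact mul_dvd_mul_left p ((pow_dvd_pow p (by nlinarith)).mul_left c)
  · -- `j = p`: no factor `p` from the binomial coefficient, but `i * p ≥ i + 2` as `p ≥ 3`
    rw [hjp]
    exact (pow_dvd_pow p (by nlinarith)).mul_left _

theorem exists_one_add_smul_pow_prime_eq {R S : Type*} [CommRing R] [Ring S] [Algebra R S]
    {p i : ℕ} (hp : p.Prime) (hp3 : 3 ≤ p) (hi : 1 ≤ i) (B : S) :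
    ∃ C : S, (1 + (p : R) ^ i • B) ^ p = 1 + (p : R) ^ (i + 1) • B + (p : R) ^ (i + 2) • C := by
  set c : ℕ → ℕ := fun j => p.choose j * p ^ (i * j)
  have hterm : ∀ j,
      ((p : R) ^ i • B) ^ j * 1 ^ (p - j) * (p.choose j : S) = (c j : R) • B ^ j := by
    intro j
    rw [one_pow, mul_one, smul_pow, ← pow_mul, smul_mul_assoc, ← Nat.cast_comm, ← nsmul_eq_mul,
      ← Nat.cast_smul_eq_nsmul R, smul_smul, mul_comm, Nat.cast_mul, Nat.cast_pow]
  have hdvd : ∀ j ∈ range (p - 1), p ^ (i + 2) ∣ c (j + 2) := fun j hj =>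
    hp.pow_add_two_dvd_choose_mul_pow hp3 hi le_add_self (by simp at hj; omega)
  have hC : ∀ j ∈ range (p - 1),
      (p : R) ^ (i + 2) • ((c (j + 2) / p ^ (i + 2) : ℕ) : R) • B ^ (j + 2)
        = (c (j + 2) : R) • B ^ (j + 2) := fun j hj => by
    rw [smul_smul, ← Nat.cast_pow, ← Nat.cast_mul, Nat.mul_div_cancel' (hdvd j hj)]
  refine ⟨∑ j ∈ range (p - 1), ((c (j + 2) / p ^ (i + 2) : ℕ) : R) • B ^ (j + 2), ?_⟩
  rw [add_comm 1, (Commute.one_right _).add_pow, show p + 1 = p - 1 + 1 + 1 by omega,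
    sum_range_succ', sum_range_succ', smul_sum]
  simp only [hterm, sum_congr rfl hC]
  simp only [c, zero_add, Nat.choose_zero_right, Nat.choose_one_right, mul_zero, mul_one,
    pow_zero, Nat.cast_one, one_smul, Nat.cast_mul, Nat.cast_pow, pow_succ']
  abel

theorem ZMod.natCast_dvd_of_pow_mul_eq_zero {p k m : ℕ} (hp : p ≠ 0) (hmk : m < k)
    {t : ZMod (p ^ k)} (h : (p : ZMod (p ^ k)) ^ m * t = 0) : (p : ZMod (p ^ k)) ∣ t := by
  have : NeZero (p ^ k) := ⟨pow_ne_zero k hp⟩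
  rw [← ZMod.natCast_zmod_val t, ← Nat.cast_pow, ← Nat.cast_mul, ZMod.natCast_eq_zero_iff] at h
  have hval : p ∣ t.val := by
    refine Nat.dvd_of_mul_dvd_mul_left (pow_pos (Nat.pos_of_ne_zero hp) m) ?_
    rw [← pow_succ]
    exact (pow_dvd_pow p hmk).trans h
  simpa using Nat.cast_dvd_cast (α := ZMod (p ^ k)) hval

theorem ZMod.pow_succ_dvd_det_one_add_smul_sub_one {p k i : ℕ} {n : Type*} [Fintype n]
    [DecidableEq n] (hp : p ≠ 0) (hi : 1 ≤ i) (hik : i + 2 ≤ k) {A : Matrix n n (ZMod (p ^ k))}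
    (hA : (1 + (p : ZMod (p ^ k)) ^ (i + 1) • A).det = 1) :
    (p : ZMod (p ^ k)) ^ (i + 1) ∣ (1 + (p : ZMod (p ^ k)) ^ i • A).det - 1 := by
  set q : ZMod (p ^ k) := (p : ZMod (p ^ k))
  have hexp (r : ZMod (p ^ k)) : ∃ e, (1 + r • A).det = 1 + A.trace * r + e * r ^ 2 :=
    ⟨_, det_one_add_smul r A⟩
  have htrace : q ∣ A.trace := by
    obtain ⟨e, he⟩ := hexp (q ^ (i + 1))
    have h := ZMod.natCast_dvd_of_pow_mul_eq_zero hp (by omega : i + 1 < k)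
      (t := A.trace + e * q ^ (i + 1)) (by linear_combination he.symm.trans hA)
    exact (dvd_add_left ((dvd_pow_self q (by omega)).mul_left e)).mp h
  obtain ⟨s, hs⟩ := htrace
  obtain ⟨u, hu⟩ : q ^ (i + 1) ∣ (q ^ i) ^ 2 := by
    rw [← pow_mul]
    exact pow_dvd_pow _ (by omega)
  obtain ⟨e, he⟩ := hexp (q ^ i)
  exact ⟨s + e * u, by linear_combination he + q ^ i * hs + e * hu⟩

namespace Matrix

theorem exists_eq_smul_iff_forall_dvd {m n R : Type*} [Semigroup R] {r : R}
    {M : Matrix m n R} : (∃ C, M = r • C) ↔ ∀ a b, r ∣ M a b := by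
  constructor
  · rintro ⟨C, rfl⟩ a b
    exact ⟨C a b, rfl⟩
  · intro h
    choose C hC using h
    exact ⟨of C, by ext a b; exact hC a b⟩

theorem SpecialLinearGroup.dvd_inv_mul_sub_one {n R : Type*} [Fintype n] [DecidableEq n]
    [CommRing R] {g h : SpecialLinearGroup n R} {r : R} {D : Matrix n n R}
    (hD : (h : Matrix n n R) = g + r • D) (a b : n) :
    r ∣ ((g⁻¹ * h : SpecialLinearGroup n R) - 1 : Matrix n n R) a b := by
  refine exists_eq_smul_iff_forall_dvd.mp
    ⟨((g⁻¹ : SpecialLinearGroup n R) : Matrix n n R) * D, ?_⟩ a b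
  rw [SpecialLinearGroup.coe_mul, hD, mul_add, ← SpecialLinearGroup.coe_mul, inv_mul_cancel,
    SpecialLinearGroup.coe_one, add_sub_cancel_left, Matrix.mul_smul]

theorem exists_specialLinearGroup_eq_add_smul {ι R : Type*} [Fintype ι] [DecidableEq ι]
    [CommRing R] (i₀ : ι) {d : R} (hd : IsNilpotent d) {M : Matrix ι ι R} (hM : d ∣ M.det - 1) :
    ∃ (X : SpecialLinearGroup ι R) (E : Matrix ι ι R), (X : Matrix ι ι R) = M + d • E := by
  obtain ⟨s, hs⟩ := hM
  have hunit : IsUnit M.det := by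
    rw [show M.det = 1 + d * s by linear_combination hs]
    exact ((Commute.all d s).isNilpotent_mul_right hd).isUnit_one_add
  obtain ⟨v, hv⟩ := hunit.exists_left_inv
  refine ⟨⟨M.updateRow i₀ (v • M i₀), ?_⟩, (0 : Matrix ι ι R).updateRow i₀ (-(v * s) • M i₀), ?_⟩
  · rw [det_updateRow_smul, updateRow_eq_self, hv]
  · ext a b
    by_cases ha : a = i₀
    · subst ha
      simp only [updateRow_self, add_apply, smul_apply, Pi.smul_apply, smul_eq_mul]
      linear_combination M a b * (hv - v * hs)
    · simp [ha]

end Matrix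

theorem congruence_pth_power_surjective_general (p : ℕ) (hp : p.Prime) (hodd : Odd p)
    (n : ℕ) (hn : 2 ≤ n) (k i : ℕ) (hi : 1 ≤ i)
    (y : Matrix.SpecialLinearGroup (Fin n) (ZMod (p ^ k)))
    (hy : ∀ a b : Fin n,
      (p : ZMod (p ^ k)) ^ (i + 1) ∣ ((y : Matrix (Fin n) (Fin n) (ZMod (p ^ k))) - 1) a b) :
    ∃ x z : Matrix.SpecialLinearGroup (Fin n) (ZMod (p ^ k)),
      y = x ^ p * z ∧
      (∀ a b : Fin n,
        (p : ZMod (p ^ k)) ^ i ∣ ((x : Matrix (Fin n) (Fin n) (ZMod (p ^ k))) - 1) a b) ∧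
      (∀ a b : Fin n,
        (p : ZMod (p ^ k)) ^ (min (i + 2) k) ∣
          ((z : Matrix (Fin n) (Fin n) (ZMod (p ^ k))) - 1) a b) := by
  have hp3 : 3 ≤ p := by
    have := hp.two_le
    rcases hodd with ⟨m, rfl⟩
    omega
  rcases le_or_gt k (i + 1) with hki | hik
  · exact ⟨1, y, by simp, fun a b => by simp,
      fun a b => (pow_dvd_pow _ (by omega)).trans (hy a b)⟩
  set q : ZMod (p ^ k) := (p : ZMod (p ^ k))
  have hq : IsNilpotent q := ⟨k, by simp [q, ← Nat.cast_pow]⟩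
  obtain ⟨A, hA⟩ := exists_eq_smul_iff_forall_dvd.mpr hy
  rw [sub_eq_iff_eq_add'] at hA
  obtain ⟨x, E, hx⟩ :=
    exists_specialLinearGroup_eq_add_smul ⟨0, by omega⟩ (hq.pow_of_pos (by omega))
    (ZMod.pow_succ_dvd_det_one_add_smul_sub_one hp.ne_zero hi (by omega) (hA ▸ y.det_coe))
  have hx' : (x : Matrix (Fin n) (Fin n) (ZMod (p ^ k))) = 1 + q ^ i • (A + q • E) := by
    rw [hx]
    module
  obtain ⟨C, hC⟩ := exists_one_add_smul_pow_prime_eq (R := ZMod (p ^ k)) hp hp3 hi (A + q • E)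
  have hxp : (y : Matrix (Fin n) (Fin n) (ZMod (p ^ k))) = ↑(x ^ p) + q ^ (i + 2) • -(E + C) := by
    rw [Matrix.SpecialLinearGroup.coe_pow, hx', hC, hA]
    module
  exact ⟨x, (x ^ p)⁻¹ * y, (mul_inv_cancel_left _ _).symm,
    exists_eq_smul_iff_forall_dvd.mp ⟨A + q • E, by rw [hx', add_sub_cancel_left]⟩,
    fun a b => (pow_dvd_pow _ (min_le_left _ _)).trans
      (SpecialLinearGroup.dvd_inv_mul_sub_one hxp a b)⟩

/-- For `p` an odd prime: every `y ∈ SL_n(ℤ/p^kℤ)` with `y ≡ 1 (mod p^{i+1})` can be written as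
`y = x^p · z` with `x ≡ 1 (mod p^i)` and `z ≡ 1 (mod p^{min(i+2,k)})`. -/
theorem congruence_pth_power_surjective (p : ℕ) (hp : p.Prime) (hodd : Odd p)
    (n : ℕ) (hn : 2 ≤ n) (k i : ℕ) (hk : 1 ≤ k) (hi : 1 ≤ i)
    (y : Matrix.SpecialLinearGroup (Fin n) (ZMod (p ^ k)))
    (hy : ∀ a b : Fin n,
      (p : ZMod (p ^ k)) ^ (i + 1) ∣ ((y : Matrix (Fin n) (Fin n) (ZMod (p ^ k))) - 1) a b) :
    ∃ x z : Matrix.SpecialLinearGroup (Fin n) (ZMod (p ^ k)),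
      y = x ^ p * z ∧
      (∀ a b : Fin n,
        (p : ZMod (p ^ k)) ^ i ∣ ((x : Matrix (Fin n) (Fin n) (ZMod (p ^ k))) - 1) a b) ∧
      (∀ a b : Fin n,
        (p : ZMod (p ^ k)) ^ (min (i + 2) k) ∣
          ((z : Matrix (Fin n) (Fin n) (ZMod (p ^ k))) - 1) a b) :=
  congruence_pth_power_surjective_general p hp hodd n hn k i hi y hy
end

section
/- Let p be an odd prime, n ≥ 2, and k ≥ 1 an integer. Then every element x of the kernel of the reduction homomorphism SL_n(ℤ/p^kℤ) → SL_n(ℤ/pℤ) satisfies x^{p^{k-1}} = 1, i.e., the exponent of this kernel divides p^{k-1}. -/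
/-!
An element of the kernel is `1 + p C` for a matrix `C`. Raising `1 + p C` to the power `p` gains
one factor of `p` in the error term, so `(1 + p C) ^ p ^ (k - 1) ∈ 1 + p ^ k M_n(ℤ/p^kℤ) = {1}`.
-/

open Polynomial

/-- The congruence `p ^ (j + 1) ∣ a ^ p ^ j - b ^ p ^ j` needs commutativity, so it is proved in
`ℤ[X]` and transported along `X ↦ c`. -/
theorem one_add_natCast_mul_pow_pow_eq_one {A : Type*} [Ring A] {p j : ℕ}
    (hp : (p : A) ^ (j + 1) = 0) (c : A) : (1 + p * c) ^ p ^ j = 1 := by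
  obtain ⟨q, hq⟩ : (p : ℤ[X]) ^ (j + 1) ∣ (1 + (p : ℤ[X]) * X) ^ p ^ j - 1 ^ p ^ j :=
    dvd_sub_pow_of_dvd_sub (by simp) j
  simpa [hp, sub_eq_zero] using congrArg (aeval c) hq

theorem ZMod.natCast_dvd_of_castHom_eq_zero {m p : ℕ} (h : p ∣ m) {a : ZMod m}
    (ha : ZMod.castHom h (ZMod p) a = 0) : (p : ZMod m) ∣ a := by
  obtain ⟨z, rfl⟩ := ZMod.intCast_surjective a
  rw [map_intCast, ZMod.intCast_zmod_eq_zero_iff_dvd] at ha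
  obtain ⟨c, rfl⟩ := ha
  exact ⟨c, by push_cast; ring⟩

theorem Matrix.exists_eq_one_add_natCast_mul_of_map_eq_one {n R S : Type*} [Fintype n]
    [DecidableEq n] [CommRing R] [Ring S] (f : R →+* S) {p : ℕ}
    (hf : ∀ a, f a = 0 → (p : R) ∣ a) {M : Matrix n n R} (hM : M.map f = 1) :
    ∃ C : Matrix n n R, M = 1 + (p : Matrix n n R) * C := by
  have hdvd : ∀ i j, (p : R) ∣ (M - 1) i j := fun i j ↦ hf _ <| by
    have : f.mapMatrix (M - 1) = 0 := by
      rw [map_sub, map_one, RingHom.mapMatrix_apply, hM, sub_self]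
    exact congrFun (congrFun this i) j
  choose C hC using hdvd
  refine ⟨Matrix.of C, ?_⟩
  rw [← sub_eq_iff_eq_add', ← diagonal_natCast]
  ext i j
  rw [diagonal_mul, of_apply, hC]

theorem congruence_kernel_exponent_general (p : ℕ) (n : ℕ) (k : ℕ) (hk : 1 ≤ k) :
    ∀ x : Matrix.SpecialLinearGroup (Fin n) (ZMod (p ^ k)),
      x ∈ MonoidHom.ker
        (Matrix.SpecialLinearGroup.map (n := Fin n)
          (ZMod.castHom (dvd_pow_self p (Nat.one_le_iff_ne_zero.mp hk)) (ZMod p))) →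
      x ^ (p ^ (k - 1)) = 1 := by
  intro x hx
  obtain ⟨C, hC⟩ := Matrix.exists_eq_one_add_natCast_mul_of_map_eq_one _
    (fun _ ↦ ZMod.natCast_dvd_of_castHom_eq_zero _) (congrArg Subtype.val hx)
  have hpk : (p : Matrix (Fin n) (Fin n) (ZMod (p ^ k))) ^ (k - 1 + 1) = 0 := by
    rw [Nat.sub_add_cancel hk, ← Nat.cast_pow, ← Matrix.diagonal_natCast, ZMod.natCast_self,
      Matrix.diagonal_zero]
  ext1
  rw [Matrix.SpecialLinearGroup.coe_pow, hC, one_add_natCast_mul_pow_pow_eq_one hpk]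
  rfl

/-- For `p` an odd prime, every element `x` of the kernel of the reduction homomorphism
`SL_n(ℤ/p^kℤ) → SL_n(ℤ/pℤ)` satisfies `x^{p^{k-1}} = 1`. -/
theorem congruence_kernel_exponent (p : ℕ) (hp : p.Prime) (hodd : Odd p)
    (n : ℕ) (hn : 2 ≤ n) (k : ℕ) (hk : 1 ≤ k) :
    ∀ x : Matrix.SpecialLinearGroup (Fin n) (ZMod (p ^ k)),
      x ∈ MonoidHom.ker
        (Matrix.SpecialLinearGroup.map (n := Fin n)
          (ZMod.castHom (dvd_pow_self p (Nat.one_le_iff_ne_zero.mp hk)) (ZMod p))) →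
      x ^ (p ^ (k - 1)) = 1 :=
  congruence_kernel_exponent_general p n k hk
end
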